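/- Let F be a distribution on ℝ, F₋ the law of −X for X ∼ F, U = Σ_{g≥0} F^{*g}, U₋ = Σ_{g≥0} F₋^{*g}, and Ũ = Σ_{g≥0} F̃^{*g} where F̃ = F₋ * F is the symmetrized distribution. Then, as measures, U₋ * U = Ũ * (U + U₋ − δ₀). -/
import Mathlib


open MeasureTheory Set

/-- `g`-fold additive convolution power of a measure on `ℝ` (with `F^{*0} = δ₀`). -/
noncomputable def convPow (F : Measure ℝ) : ℕ → Measure ℝ
  | 0 => Measure.dirac 0
  | n + 1 => Measure.conv (convPow F n) F

/-- The renewal measure `U = ∑_{g ≥ 0} F^{*g}`. -/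
noncomputable def renewalMeasure (F : Measure ℝ) : Measure ℝ :=
  Measure.sum (convPow F)

open scoped ENNReal

namespace Stmt8Aux

lemma conv_assoc (μ ν ρ : Measure ℝ) [SFinite μ] [SFinite ν] [SFinite ρ] :
    Measure.conv (Measure.conv μ ν) ρ = Measure.conv μ (Measure.conv ν ρ) := by
  unfold Measure.conv
  rw [show ρ = Measure.map id ρ from (Measure.map_id).symm,
    Measure.map_prod_map _ _ (by fun_prop) measurable_id,
    Measure.map_id,
    show μ = Measure.map id μ from (Measure.map_id).symm,
    Measure.map_prod_map _ _ measurable_id (by fun_prop),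
    Measure.map_id,
    ← Measure.prodAssoc_prod,
    Measure.map_map (by fun_prop) (by fun_prop),
    Measure.map_map (by fun_prop) (by fun_prop),
    Measure.map_map (by fun_prop) (by fun_prop)]
  congr 1
  ext p
  exact add_assoc p.1.1 p.1.2 p.2

instance convPow_prob (F : Measure ℝ) [IsProbabilityMeasure F] (n : ℕ) :
    IsProbabilityMeasure (convPow F n) := by
  induction n with
  | zero => exact MeasureTheory.Measure.dirac.isProbabilityMeasure
  | succ n ih => exact MeasureTheory.Measure.probabilitymeasure_of_probabilitymeasures_conv _ _

lemma convPow_add (F : Measure ℝ) [IsProbabilityMeasure F] (m n : ℕ) :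
    convPow F (m + n) = Measure.conv (convPow F m) (convPow F n) := by
  induction n with
  | zero => simp [convPow]
  | succ n ih =>
    show convPow F (m + n + 1) = _
    rw [show convPow F (m + n + 1) = Measure.conv (convPow F (m + n)) F from rfl, ih,
      conv_assoc]
    rfl

lemma convPow_conv (μ ν : Measure ℝ) [IsProbabilityMeasure μ] [IsProbabilityMeasure ν] (n : ℕ) :
    convPow (Measure.conv μ ν) n = Measure.conv (convPow μ n) (convPow ν n) := by
  induction n with
  | zero => simp [convPow]
  | succ n ih =>
    show Measure.conv (convPow (Measure.conv μ ν) n) (Measure.conv μ ν) = _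
    rw [ih]
    show _ = Measure.conv (Measure.conv (convPow μ n) μ) (Measure.conv (convPow ν n) ν)
    rw [conv_assoc, conv_assoc (convPow μ n)]
    congr 1
    rw [← conv_assoc, ← conv_assoc, Measure.conv_comm (convPow ν n) μ]

lemma conv_sum_left (μ : ℕ → Measure ℝ) (ν : Measure ℝ) [SFinite ν] :
    Measure.conv (Measure.sum μ) ν = Measure.sum (fun i => Measure.conv (μ i) ν) := by
  unfold Measure.conv
  rw [Measure.prod_sum_left, Measure.map_sum (by fun_prop)]

lemma conv_sum_right (μ : Measure ℝ) (ν : ℕ → Measure ℝ) [∀ i, SFinite (ν i)] :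
    Measure.conv μ (Measure.sum ν) = Measure.sum (fun i => Measure.conv μ (ν i)) := by
  unfold Measure.conv
  rw [Measure.prod_sum_right, Measure.map_sum (by fun_prop)]

lemma tsum_split (f : ℕ × ℕ → ℝ≥0∞) :
    (∑' p : ℕ × ℕ, f (p.1, p.1 + p.2)) + ∑' p : ℕ × ℕ, f (p.1 + p.2, p.1)
      = (∑' p : ℕ × ℕ, f p) + ∑' g : ℕ, f (g, g) := by
  have h1 : (∑' p : ℕ × ℕ, f (p.1 + p.2, p.1))
      = (∑' g : ℕ, f (g, g)) + ∑' p : ℕ × ℕ, f (p.1 + p.2 + 1, p.1) := by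
    rw [ENNReal.tsum_prod' (f := fun p : ℕ × ℕ => f (p.1 + p.2, p.1)),
        ENNReal.tsum_prod' (f := fun p : ℕ × ℕ => f (p.1 + p.2 + 1, p.1)), ← ENNReal.tsum_add]
    exact tsum_congr fun a => tsum_eq_zero_add' (f := fun b => f (a + b, a)) ENNReal.summable
  have hinj1 : Function.Injective (fun p : ℕ × ℕ => (p.1, p.1 + p.2)) := by
    intro p q h
    simp only [Prod.mk.injEq] at h
    exact Prod.ext h.1 (by omega)
  have hinj2 : Function.Injective (fun p : ℕ × ℕ => (p.1 + p.2 + 1, p.1)) := by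
    intro p q h
    simp only [Prod.mk.injEq] at h
    exact Prod.ext h.2 (by omega)
  have hrange : Set.range (fun p : ℕ × ℕ => (p.1 + p.2 + 1, p.1))
      = (Set.range (fun p : ℕ × ℕ => (p.1, p.1 + p.2)))ᶜ := by
    ext ⟨a, b⟩
    simp only [Set.mem_range, Set.mem_compl_iff, Prod.mk.injEq, Prod.exists, not_exists]
    constructor
    · rintro ⟨x, y, hx, hy⟩ c d ⟨hc, hd⟩
      omega
    · intro h
      refine ⟨b, a - b - 1, ?_, rfl⟩
      by_contra hab
      exact h a (b - a) ⟨rfl, by omega⟩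
  have h2 : (∑' p : ℕ × ℕ, f (p.1, p.1 + p.2)) + ∑' p : ℕ × ℕ, f (p.1 + p.2 + 1, p.1)
      = ∑' p : ℕ × ℕ, f p := by
    rw [← tsum_range (fun q : ℕ × ℕ => f q) hinj1, ← tsum_range (fun q : ℕ × ℕ => f q) hinj2,
      hrange]
    exact Summable.tsum_add_tsum_compl ENNReal.summable ENNReal.summable
  rw [h1, ← h2]
  ring

end Stmt8Aux

open Stmt8Aux

/-- For a distribution `F` on `ℝ` with reflection `F₋`, renewal measures
`U, U₋`, and symmetrized renewal measure `Ũ = ∑ F̃^{*g}` with `F̃ = F₋ * F`,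
one has `U₋ * U = Ũ * (U + U₋ - δ₀)`; since measures cannot be subtracted,
this is stated in the equivalent rearranged form
`Ũ * (U + U₋) = U₋ * U + Ũ * δ₀ = U₋ * U + Ũ`. -/
theorem stmt8
    (F : Measure ℝ) [IsProbabilityMeasure F]
    (Fneg : Measure ℝ) (hFneg : Fneg = Measure.map (fun x : ℝ => -x) F)
    (Ftilde : Measure ℝ) (hFtilde : Ftilde = Measure.conv Fneg F)
    (U Uneg Utilde : Measure ℝ)
    (hU : U = renewalMeasure F) (hUneg : Uneg = renewalMeasure Fneg)
    (hUtilde : Utilde = renewalMeasure Ftilde)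
    -- local finiteness assumptions so that all convolutions are well defined
    (hLF : IsLocallyFiniteMeasure U) (hLFneg : IsLocallyFiniteMeasure Uneg)
    (hLFtilde : IsLocallyFiniteMeasure Utilde) :
    Measure.conv Utilde (U + Uneg) = Measure.conv Uneg U + Utilde := by
  have hPneg : IsProbabilityMeasure Fneg := by
    rw [hFneg]; exact Measure.isProbabilityMeasure_map (by fun_prop)
  have hPtilde : IsProbabilityMeasure Ftilde := by
    rw [hFtilde]; infer_instance
  subst hU hUneg hUtilde
  set m : ℕ × ℕ → Measure ℝ :=
    fun p => Measure.conv (convPow Fneg p.1) (convPow F p.2) with hm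
  have hSU : SFinite (renewalMeasure F) := by unfold renewalMeasure; infer_instance
  have hSUn : SFinite (renewalMeasure Fneg) := by unfold renewalMeasure; infer_instance
  have hSUt : SFinite (renewalMeasure Ftilde) := by unfold renewalMeasure; infer_instance
  have key : ∀ g k : ℕ, Measure.conv (convPow Ftilde g) (convPow F k) = m (g, g + k) := by
    intro g k
    rw [hFtilde, convPow_conv, conv_assoc, ← convPow_add]
  have key2 : ∀ g k : ℕ, Measure.conv (convPow Ftilde g) (convPow Fneg k) = m (g + k, g) := by
    intro g k
    rw [hFtilde, convPow_conv, conv_assoc, Measure.conv_comm (convPow F g), ← conv_assoc,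
      ← convPow_add]
  have e1 : Measure.conv (renewalMeasure Ftilde) (renewalMeasure F)
      = Measure.sum (fun p : ℕ × ℕ => m (p.1, p.1 + p.2)) := by
    unfold renewalMeasure
    rw [conv_sum_left]
    rw [show (fun i => Measure.conv (convPow Ftilde i) (Measure.sum (convPow F)))
        = fun i => Measure.sum (fun k => Measure.conv (convPow Ftilde i) (convPow F k)) from
      funext fun i => conv_sum_right _ _, Measure.sum_sum]
    exact congrArg _ (funext fun p => key p.1 p.2)
  have e2 : Measure.conv (renewalMeasure Ftilde) (renewalMeasure Fneg)
      = Measure.sum (fun p : ℕ × ℕ => m (p.1 + p.2, p.1)) := by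
    unfold renewalMeasure
    rw [conv_sum_left]
    rw [show (fun i => Measure.conv (convPow Ftilde i) (Measure.sum (convPow Fneg)))
        = fun i => Measure.sum (fun k => Measure.conv (convPow Ftilde i) (convPow Fneg k)) from
      funext fun i => conv_sum_right _ _, Measure.sum_sum]
    exact congrArg _ (funext fun p => key2 p.1 p.2)
  have e3 : Measure.conv (renewalMeasure Fneg) (renewalMeasure F) = Measure.sum m := by
    unfold renewalMeasure
    rw [conv_sum_left]
    rw [show (fun i => Measure.conv (convPow Fneg i) (Measure.sum (convPow F)))
        = fun i => Measure.sum (fun k => Measure.conv (convPow Fneg i) (convPow F k)) from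
      funext fun i => conv_sum_right _ _, Measure.sum_sum]
  have e4 : renewalMeasure Ftilde = Measure.sum (fun g : ℕ => m (g, g)) := by
    unfold renewalMeasure
    refine congrArg _ (funext fun g => ?_)
    have := key g 0
    simpa [convPow] using this
  rw [Measure.conv_add, e1, e2, e3, e4]
  ext s hs
  simp only [Measure.add_apply, Measure.sum_apply _ hs]
  exact tsum_split (fun p => m p s)
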